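/- arXiv:2111.04902 — 2 statements merged into one kernel-verified Lean document; each statement's English description precedes it below -/
import Mathlib

section
/- Let Z be an FSM, M a thin module of Z, and v an x-exit of M for some x ∈ Σ. Then for every node q ∈ M there is an x-path in Z from q to v all of whose nodes other than v belong to M. -/
open Classical

universe u v

variable {Q : Type u} {E : Type v}

/-- `u` is an entrance of `M`: `u ∈ M` receives an arc from outside `M`. -/
def IsEntrance (δ : Q → E → Option Q) (M : Set Q) (u : Q) : Prop :=
  u ∈ M ∧ ∃ x : E, ∃ v : Q, v ∉ M ∧ δ v x = some u

/-- `v` is an `x`-exit of `M`. -/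
def IsExit (δ : Q → E → Option Q) (M : Set Q) (x : E) (v : Q) : Prop :=
  v ∉ M ∧ ∃ u ∈ M, δ u x = some v

/-- `M` is a module of the FSM `(Q, E, δ, s)`. -/
def IsFsmModule (δ : Q → E → Option Q) (s : Q) (M : Set Q) : Prop :=
  M.Nonempty ∧
  (∀ u v : Q, IsEntrance δ M u → IsEntrance δ M v → u = v) ∧
  (s ∈ M → ∀ u : Q, IsEntrance δ M u → u = s) ∧
  ∀ x : E, (∃ v, IsExit δ M x v) →
    ((∀ v w : Q, IsExit δ M x v → IsExit δ M x w → v = w) ∧ ∀ u ∈ M, (δ u x).isSome)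

/-- `M` contains an `x`-cycle. -/
def HasXCycleIn (δ : Q → E → Option Q) (x : E) (M : Set Q) : Prop :=
  ∃ q ∈ M, Relation.TransGen (fun a b => a ∈ M ∧ δ a x = some b) q q

/-- `M` is a thin module. -/
def IsThinModule (δ : Q → E → Option Q) (s : Q) (M : Set Q) : Prop :=
  IsFsmModule δ s M ∧ ∀ x : E, (¬ ∃ v, IsExit δ M x v) ∨ ¬ HasXCycleIn δ x M

/-- One transition step of the FSM, as a digraph arc. -/
def FsmStep (δ : Q → E → Option Q) (u v : Q) : Prop := ∃ x : E, δ u x = some v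

/-- Reachability by a directed path. -/
def Reaches (δ : Q → E → Option Q) : Q → Q → Prop := Relation.ReflTransGen (FsmStep δ)

/-- Every state is reachable from the start state. -/
def Accessible (δ : Q → E → Option Q) (s : Q) : Prop := ∀ q : Q, Reaches δ s q

/-- `σ` is the start node of the module `M`. -/
def IsStartNode (δ : Q → E → Option Q) (s : Q) (M : Set Q) (σ : Q) : Prop :=
  (s ∈ M ∧ σ = s) ∨ (s ∉ M ∧ IsEntrance δ M σ)

/-- Two sets overlap. -/
def Overlap {α : Type*} (X Y : Set α) : Prop :=
  (X ∩ Y).Nonempty ∧ ¬ X ⊆ Y ∧ ¬ Y ⊆ X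

/-- A collection of sets is overlapping: across every partition into two
nonempty blocks there is an overlapping pair. -/
def OverlapColl {α : Type*} (S : Set (Set α)) : Prop :=
  ∀ T ⊆ S, T.Nonempty → (S \ T).Nonempty → ∃ a ∈ T, ∃ b ∈ S \ T, Overlap a b

/-- `M` is decomposable with respect to the family `F`. -/
def Decomposable {α : Type*} (F : Set (Set α)) (M : Set α) : Prop :=
  ∃ S : Set (Set α), S ⊆ F ∧ OverlapColl S ∧ ⋃₀ S = M ∧ ∃ a ∈ S, ∃ b ∈ S, a ≠ b

/-- `M` is an indecomposable member of the family `F`. -/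
def Indecomposable {α : Type*} (F : Set (Set α)) (M : Set α) : Prop :=
  M ∈ F ∧ ¬ Decomposable F M

/-- `M` is an indecomposable thin module of the FSM. -/
def IndecompThin (δ : Q → E → Option Q) (s : Q) (M : Set Q) : Prop :=
  Indecomposable {N : Set Q | IsThinModule δ s N} M


namespace Relation

variable {α : Type*} {r : α → α → Prop}

theorem wellFounded_swap_transGen_of_acyclic [Finite α] (hacyc : ∀ a, ¬ TransGen r a a) :
    WellFounded (Function.swap (TransGen r)) :=
  have : IsTrans α (Function.swap (TransGen r)) := ⟨fun _ _ _ hab hbc => hbc.trans hab⟩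
  have : Std.Irrefl (Function.swap (TransGen r)) := ⟨hacyc⟩
  Finite.wellFounded_of_trans_of_irrefl _

/-- A walk that can always be continued while inside `M` must leave `M`, since a finite
acyclic digraph has no infinite walk. -/
theorem reflTransGen_of_forall_exit_eq [Finite α] {M : Set α} {v : α}
    (hacyc : ∀ a, ¬ TransGen r a a) (hsucc : ∀ a ∈ M, ∃ b, r a b)
    (hexit : ∀ a ∈ M, ∀ b ∉ M, r a b → b = v) :
    ∀ a ∈ M, ReflTransGen r a v := by
  intro a
  induction a using (wellFounded_swap_transGen_of_acyclic hacyc).induction with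
  | _ a ih =>
    intro ha
    obtain ⟨b, hab⟩ := hsucc a ha
    by_cases hb : b ∈ M
    · exact .head hab (ih b (.single hab) hb)
    · exact hexit a ha b hb hab ▸ .single hab

end Relation

section Module

variable {δ : Q → E → Option Q} {s : Q} {M : Set Q} {x : E} {v : Q}

theorem IsFsmModule.isSome_of_isExit (hM : IsFsmModule δ s M) (hv : IsExit δ M x v) :
    ∀ u ∈ M, (δ u x).isSome :=
  (hM.2.2.2 x ⟨v, hv⟩).2

theorem IsFsmModule.eq_of_isExit (hM : IsFsmModule δ s M) (hv : IsExit δ M x v) {w : Q}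
    (hw : IsExit δ M x w) : w = v :=
  (hM.2.2.2 x ⟨v, hv⟩).1 w v hw hv

theorem IsThinModule.not_hasXCycleIn (hM : IsThinModule δ s M) (hv : IsExit δ M x v) :
    ¬ HasXCycleIn δ x M :=
  (hM.2 x).resolve_left (not_not.mpr ⟨v, hv⟩)

theorem not_transGen_of_not_hasXCycleIn (h : ¬ HasXCycleIn δ x M) (a : Q) :
    ¬ Relation.TransGen (fun a b => a ∈ M ∧ δ a x = some b) a a := fun ha =>
  have ⟨_, ⟨haM, _⟩, _⟩ := Relation.TransGen.head'_iff.mp ha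
  h ⟨a, haM, ha⟩

end Module

/-- Let `M` be a thin module of an FSM `Z` and `v` an `x`-exit of
`M`. Then from every `q ∈ M` there is an `x`-path to `v` all of whose nodes other
than `v` belong to `M` (formalised: `v` is reachable from `q` by `x`-arcs whose
sources all lie in `M`). -/
theorem stmt8 [Fintype Q] (δ : Q → E → Option Q) (s : Q)
    (M : Set Q) (hM : IsThinModule δ s M) (x : E) (v : Q) (hv : IsExit δ M x v) :
    ∀ q ∈ M, Relation.ReflTransGen (fun a b => a ∈ M ∧ δ a x = some b) q v := by
  have hmod := hM.1
  refine Relation.reflTransGen_of_forall_exit_eq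
    (not_transGen_of_not_hasXCycleIn (hM.not_hasXCycleIn hv)) (fun a ha => ?_) ?_
  · obtain ⟨b, hb⟩ := Option.isSome_iff_exists.mp (hmod.isSome_of_isExit hv a ha)
    exact ⟨b, ha, hb⟩
  · rintro a ha b hb ⟨-, hab⟩
    exact hmod.eq_of_isExit hv ⟨hb, a, ha, hab⟩
end

section
/- Let Z be an accessible FSM. A set M ⊆ Q is a thin module of Z if and only if there exists an overlapping collection of indecomposable thin modules of Z whose union is M. -/
open Classical

universe u v

variable {Q : Type u} {E : Type v}

/-!
Two thin modules that meet have a thin union. One of their start nodes lies in the other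
module, since otherwise the intersection would have no entrance and, by accessibility, would
contain `s`; that start node then serves the union. If the union has an `x`-exit, one module
is `x`-total without `x`-cycles, so `x`-steps cannot stay inside the intersection forever, and
this forces the other module to leave through the same exit. Adding the members of an
overlapping collection one overlapping member at a time therefore keeps the union thin.
Conversely, a decomposable thin module is an overlapping union of strictly smaller thin modules;
decomposing these recursively and gluing the pieces gives an overlapping collection again,
because whenever two unions of overlapping collections overlap, some of their members overlap.
-/

section Overlapping

variable {α : Type*} {S : Set (Set α)} {a b X : Set α}

theorem Overlap.symm (h : Overlap a b) : Overlap b a :=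
  ⟨Set.inter_comm a b ▸ h.1, h.2.2, h.2.1⟩

theorem Overlap.subset_or_overlap (h : Overlap a b) (haX : a ⊆ X) : b ⊆ X ∨ Overlap b X := by
  by_cases hbX : b ⊆ X
  · exact Or.inl hbX
  · obtain ⟨p, hpa, hpb⟩ := h.1
    exact Or.inr ⟨⟨p, hpb, haX hpa⟩, hbX, fun hXb => h.2.1 (haX.trans hXb)⟩

def OverlapIn (S : Set (Set α)) (a b : Set α) : Prop := a ∈ S ∧ b ∈ S ∧ Overlap a b

theorem overlapIn_mono {S T : Set (Set α)} (h : S ⊆ T) : OverlapIn S ≤ OverlapIn T :=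
  fun _ _ hab => ⟨h hab.1, h hab.2.1, hab.2.2⟩

theorem overlapColl_iff :
    OverlapColl S ↔ ∀ a ∈ S, ∀ b ∈ S, Relation.ReflTransGen (OverlapIn S) a b := by
  constructor
  · intro hS a ha b hb
    by_contra hab
    obtain ⟨c, ⟨hcS, hac⟩, d, ⟨hdS, hd⟩, hcd⟩ :=
      hS {c | c ∈ S ∧ Relation.ReflTransGen (OverlapIn S) a c} (fun c hc => hc.1)
        ⟨a, ha, .refl⟩ ⟨b, hb, fun h => hab h.2⟩
    exact hd ⟨hdS, hac.tail ⟨hcS, hdS, hcd⟩⟩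
  · rintro hS T hTS ⟨a, haT⟩ ⟨b, hbS, hbT⟩
    induction hS a (hTS haT) b hbS with
    | refl => exact absurd haT hbT
    | @tail c d _ hcd ih =>
      by_cases hcT : c ∈ T
      · exact ⟨c, hcT, d, ⟨hcd.2.1, hbT⟩, hcd.2.2⟩
      · exact ih hcd.1 hcT

theorem overlapColl_singleton (a : Set α) : OverlapColl {a} :=
  overlapColl_iff.2 fun _ hb _ hc => by rw [hb, hc]

theorem OverlapColl.subsingleton_of_sUnion_mem (hS : OverlapColl S) (hmem : ⋃₀ S ∈ S) :
    S.Subsingleton := by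
  suffices h : ∀ b ∈ S, b = ⋃₀ S from fun a ha b hb => (h a ha).trans (h b hb).symm
  by_contra! ⟨b, hbS, hb⟩
  obtain ⟨a, rfl, c, ⟨hcS, -⟩, hac⟩ :=
    hS {⋃₀ S} (Set.singleton_subset_iff.2 hmem) ⟨_, rfl⟩ ⟨b, hbS, hb⟩
  exact hac.2.2 (Set.subset_sUnion_of_mem hcS)

theorem OverlapColl.sUnion_subset_of_subset (hS : OverlapColl S) (ha : a ∈ S) (haX : a ⊆ X)
    (hX : ∀ c ∈ S, ¬ Overlap c X) : ⋃₀ S ⊆ X := by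
  refine Set.sUnion_subset fun c hc => ?_
  induction overlapColl_iff.1 hS a ha c hc with
  | refl => exact haX
  | @tail c d _ hcd ih =>
    exact (hcd.2.2.subset_or_overlap (ih hcd.1)).resolve_right (hX d hcd.2.1)

theorem exists_overlap_of_overlap_sUnion {S T : Set (Set α)} (hS : OverlapColl S)
    (hT : OverlapColl T) (h : Overlap (⋃₀ S) (⋃₀ T)) : ∃ a ∈ S, ∃ b ∈ T, Overlap a b := by
  by_contra! hno
  obtain ⟨⟨p, ⟨a, ha, hpa⟩, ⟨b, hb, hpb⟩⟩, hST, hTS⟩ := h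
  by_cases hab : a ⊆ b
  · exact hST ((hS.sUnion_subset_of_subset ha hab fun c hc => hno c hc b hb).trans
      (Set.subset_sUnion_of_mem hb))
  · have hba : b ⊆ a := by
      by_contra hba
      exact hno a ha b hb ⟨⟨p, hpa, hpb⟩, hab, hba⟩
    exact hTS ((hT.sUnion_subset_of_subset hb hba fun c hc h => hno a ha c hc h.symm).trans
      (Set.subset_sUnion_of_mem ha))

theorem OverlapColl.biUnion (hS : OverlapColl S) {f : Set α → Set (Set α)}
    (hf : ∀ A ∈ S, OverlapColl (f A) ∧ ⋃₀ f A = A) : OverlapColl (⋃ A ∈ S, f A) := by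
  have hsub : ∀ A ∈ S, f A ⊆ ⋃ A ∈ S, f A := fun A hA => Set.subset_biUnion_of_mem hA
  have hwithin : ∀ A ∈ S, ∀ c ∈ f A, ∀ d ∈ f A,
      Relation.ReflTransGen (OverlapIn (⋃ A ∈ S, f A)) c d := fun A hA c hc d hd =>
    Relation.ReflTransGen.mono (overlapIn_mono (hsub A hA)) _ _
      (overlapColl_iff.1 (hf A hA).1 c hc d hd)
  refine overlapColl_iff.2 fun c hc d hd => ?_
  obtain ⟨A, hA, hcA⟩ := Set.mem_iUnion₂.1 hc
  obtain ⟨B, hB, hdB⟩ := Set.mem_iUnion₂.1 hd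
  have hAB := overlapColl_iff.1 hS A hA B hB
  clear hB
  induction hAB generalizing d with
  | refl => exact hwithin A hA c hcA d hdB
  | @tail P B _ hPB ih =>
    have hov : Overlap (⋃₀ f P) (⋃₀ f B) := by
      rw [(hf P hPB.1).2, (hf B hPB.2.1).2]
      exact hPB.2.2
    obtain ⟨e, heP, g, hgB, heg⟩ :=
      exists_overlap_of_overlap_sUnion (hf P hPB.1).1 (hf B hPB.2.1).1 hov
    exact ((ih e (hsub P hPB.1 heP) heP).tail ⟨hsub P hPB.1 heP, hsub B hPB.2.1 hgB, heg⟩).trans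
      (hwithin B hPB.2.1 g hgB d hdB)

theorem OverlapColl.sUnion_mem {F : Set (Set α)}
    (hF : ∀ A ∈ F, ∀ B ∈ F, Overlap A B → A ∪ B ∈ F) (hSF : S ⊆ F) (hS : OverlapColl S)
    (hne : S.Nonempty) (hfin : S.Finite) : ⋃₀ S ∈ F := by
  obtain ⟨A, hA⟩ := hne
  have hgood : {T | T ⊆ S ∧ T.Nonempty ∧ ⋃₀ T ∈ F}.Finite :=
    hfin.finite_subsets.subset fun T hT => hT.1
  obtain ⟨T, ⟨hTS, hTne, hTF⟩, hTmax⟩ := hgood.exists_maximal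
    ⟨{A}, Set.singleton_subset_iff.2 hA, ⟨A, rfl⟩, by simpa using hSF hA⟩
  by_cases hST : S ⊆ T
  · rwa [hST.antisymm hTS]
  obtain ⟨a, haT, b, ⟨hbS, hbT⟩, hab⟩ :=
    hS T hTS hTne (Set.nonempty_of_not_subset hST)
  have hbF : ⋃₀ insert b T ∈ F := by
    rw [Set.sUnion_insert]
    rcases hab.subset_or_overlap (Set.subset_sUnion_of_mem haT) with hb | hb
    · rwa [Set.union_eq_self_of_subset_left hb]
    · exact hF b (hSF hbS) _ hTF hb
  exact (hbT (hTmax ⟨Set.insert_subset hbS hTS, Set.insert_nonempty b T, hbF⟩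
    (Set.subset_insert b T) (Set.mem_insert b T))).elim

theorem exists_indecomposable_overlapColl [Finite α] {F : Set (Set α)} {M : Set α}
    (hM : M ∈ F) : ∃ S : Set (Set α), S.Nonempty ∧ (∀ A ∈ S, Indecomposable F A) ∧
      OverlapColl S ∧ ⋃₀ S = M := by
  induction M using WellFoundedLT.induction with
  | _ M ih =>
    by_cases hdec : Decomposable F M
    · obtain ⟨S, hSF, hS, rfl, a, ha, b, hb, hab⟩ := hdec
      have hlt : ∀ A ∈ S, A < ⋃₀ S := fun A hA =>
        (Set.subset_sUnion_of_mem hA).lt_of_ne fun h =>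
          hab (hS.subsingleton_of_sUnion_mem (h ▸ hA) ha hb)
      choose! f hfne hfind hfS hfunion using fun A hA => ih A (hlt A hA) (hSF hA)
      refine ⟨⋃ A ∈ S, f A, ?_, ?_, hS.biUnion fun A hA => ⟨hfS A hA, hfunion A hA⟩, ?_⟩
      · obtain ⟨c, hc⟩ := hfne a ha
        exact ⟨c, Set.mem_biUnion ha hc⟩
      · simp only [Set.mem_iUnion₂]
        rintro C ⟨A, hA, hC⟩
        exact hfind A hA C hC
      · simp only [Set.sUnion_iUnion]
        exact (Set.iUnion₂_congr hfunion).trans Set.sUnion_eq_biUnion.symm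
    · exact ⟨{M}, ⟨M, rfl⟩, fun A hA => hA ▸ ⟨hM, hdec⟩, overlapColl_singleton M,
        Set.sUnion_singleton M⟩

end Overlapping

section Fsm

variable {δ : Q → E → Option Q} {s : Q} {x : E} {A B M : Set Q} {w : Q}

theorem hasXCycleIn_iff [Finite Q] : HasXCycleIn δ x M ↔
    ∃ D ⊆ M, D.Nonempty ∧ ∀ d ∈ D, ∃ d' ∈ D, δ d x = some d' := by
  set R : Q → Q → Prop := fun a b => a ∈ M ∧ δ a x = some b
  constructor
  · rintro ⟨q, -, hq⟩
    refine ⟨{p | Relation.TransGen R p q}, fun p hp => ?_, ⟨q, hq⟩, fun p hp => ?_⟩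
    · obtain ⟨p', hpp', -⟩ := Relation.TransGen.head'_iff.1 hp
      exact hpp'.1
    · obtain ⟨p', hpp', hp'q⟩ := Relation.TransGen.head'_iff.1 hp
      rcases Relation.ReflTransGen.cases_head hp'q with rfl | ⟨p'', h, hp''q⟩
      · exact ⟨p', hq, hpp'.2⟩
      · exact ⟨p', Relation.TransGen.head' h hp''q, hpp'.2⟩
  · rintro ⟨D, hDM, hDne, hD⟩
    by_contra hacyc
    -- Without cycles, "is reachable from" is a well-founded order on the finite type `Q`;
    -- a minimal element of `D` has no successor in `D`.
    have : IsTrans Q (fun a b => Relation.TransGen R b a) := ⟨fun _ _ _ hab hbc => hbc.trans hab⟩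
    have : Std.Irrefl (fun a b => Relation.TransGen R b a) :=
      ⟨fun a ha => hacyc ⟨a, (Relation.TransGen.head'_iff.1 ha).choose_spec.1.1, ha⟩⟩
    obtain ⟨m, hmD, hmin⟩ :=
      (Finite.wellFounded_of_trans_of_irrefl fun a b => Relation.TransGen R b a).has_min D hDne
    obtain ⟨m', hm'D, hmm'⟩ := hD m hmD
    exact hmin m' hm'D (.single ⟨hDM hmD, hmm'⟩)

theorem not_hasXCycleIn_union [Finite Q]
    (hclosed : ∀ p ∈ A, ∀ q, δ p x = some q → q ∈ A ∪ B → q ∈ A)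
    (hA : ¬ HasXCycleIn δ x A) (hB : ¬ HasXCycleIn δ x B) : ¬ HasXCycleIn δ x (A ∪ B) := by
  rw [hasXCycleIn_iff] at hA hB ⊢
  rintro ⟨D, hDAB, hDne, hD⟩
  by_cases hDA : (D ∩ A).Nonempty
  · refine hA ⟨D ∩ A, Set.inter_subset_right, hDA, ?_⟩
    rintro d ⟨hdD, hdA⟩
    obtain ⟨d', hd'D, hdd'⟩ := hD d hdD
    exact ⟨d', ⟨hd'D, hclosed d hdA d' hdd' (hDAB hd'D)⟩, hdd'⟩
  · exact hB ⟨D, fun d hd => (hDAB hd).resolve_left fun hdA => hDA ⟨d, hd, hdA⟩, hDne, hD⟩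

def ExitsThrough (δ : Q → E → Option Q) (x : E) (M : Set Q) (w : Q) : Prop :=
  (∀ v, IsExit δ M x v → v = w) ∧ (∀ p ∈ M, (δ p x).isSome) ∧ ¬ HasXCycleIn δ x M

theorem IsThinModule.exitsThrough (hM : IsThinModule δ s M) (hw : IsExit δ M x w) :
    ExitsThrough δ x M w := by
  have hex : ∃ v, IsExit δ M x v := ⟨w, hw⟩
  obtain ⟨huniq, htot⟩ := hM.1.2.2.2 x hex
  exact ⟨fun v hv => huniq v w hv hw, htot, (hM.2 x).resolve_left (not_not_intro hex)⟩

theorem exists_isExit_mem_insert [Finite Q] {c : Q} (hc : c ∈ A ∩ B)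
    (hA : ExitsThrough δ x A w) (hwB : w ∉ B) : ∃ z, IsExit δ B x z ∧ z ∈ insert w A := by
  by_contra! hno
  refine hA.2.2 (hasXCycleIn_iff.2 ⟨A ∩ B, Set.inter_subset_left, ⟨c, hc⟩, ?_⟩)
  rintro d ⟨hdA, hdB⟩
  obtain ⟨d', hdd'⟩ := Option.isSome_iff_exists.1 (hA.2.1 d hdA)
  have hd'B : d' ∈ B := by
    by_contra hd'B
    have hd' := hno d' ⟨hd'B, d, hdB, hdd'⟩
    exact hd' (.inl (hA.1 d' ⟨fun hd'A => hd' (.inr hd'A), d, hdA, hdd'⟩))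
  have hd'A : d' ∈ A := by
    by_contra hd'A
    exact hwB (hA.1 d' ⟨hd'A, d, hdA, hdd'⟩ ▸ hd'B)
  exact ⟨d', ⟨hd'A, hd'B⟩, hdd'⟩

theorem IsThinModule.exitsThrough_union [Finite Q] (hA : IsThinModule δ s A)
    (hB : IsThinModule δ s B) (hAB : (A ∩ B).Nonempty) (hw : IsExit δ A x w) (hwB : w ∉ B) :
    ExitsThrough δ x (A ∪ B) w := by
  obtain ⟨c, hc⟩ := hAB
  have hxA := hA.exitsThrough hw
  obtain ⟨z, hz, hzw⟩ := exists_isExit_mem_insert hc hxA hwB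
  have hxB := hB.exitsThrough hz
  refine ⟨?_, fun p hp => hp.elim (hxA.2.1 p) (hxB.2.1 p),
    not_hasXCycleIn_union ?_ hxA.2.2 hxB.2.2⟩
  · rintro v ⟨hv, u, hu | hu, huv⟩
    · exact hxA.1 v ⟨fun h => hv (.inl h), u, hu, huv⟩
    · obtain rfl := hxB.1 v ⟨fun h => hv (.inr h), u, hu, huv⟩
      exact hzw.resolve_right fun h => hv (.inl h)
  · intro p hp q hpq hq
    by_contra hqA
    obtain rfl := hxA.1 q ⟨hqA, p, hp, hpq⟩
    exact hq.elim hqA hwB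

theorem start_mem_of_forall_not_isEntrance (hacc : Accessible δ s) (hne : M.Nonempty)
    (hM : ∀ u, ¬ IsEntrance δ M u) : s ∈ M := by
  obtain ⟨c, hc⟩ := hne
  induction hacc c with
  | refl => exact hc
  | @tail b c _ hbc ih =>
    by_contra hbM
    obtain ⟨y, hy⟩ := hbc
    exact hM c ⟨hc, y, b, fun hb => hbM (ih hb), hy⟩

theorem exists_isStartNode (hacc : Accessible δ s) (hne : M.Nonempty) :
    ∃ σ, IsStartNode δ s M σ := by
  by_cases hs : s ∈ M
  · exact ⟨s, .inl ⟨hs, rfl⟩⟩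
  · by_contra! h
    exact hs (start_mem_of_forall_not_isEntrance hacc hne fun u hu => h u (.inr ⟨hs, hu⟩))

def EntersOnlyAt (δ : Q → E → Option Q) (s : Q) (M : Set Q) (σ : Q) : Prop :=
  (∀ u, IsEntrance δ M u → u = σ) ∧ (s ∈ M → σ = s)

theorem IsFsmModule.entersOnlyAt {σ : Q} (hM : IsFsmModule δ s M)
    (hσ : IsStartNode δ s M σ) : EntersOnlyAt δ s M σ := by
  rcases hσ with ⟨hs, rfl⟩ | ⟨hs, hσ⟩
  · exact ⟨hM.2.2.1 hs, fun _ => rfl⟩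
  · exact ⟨fun u hu => hM.2.1 u σ hu hσ, fun h => absurd h hs⟩

theorem EntersOnlyAt.union {σA σB : Q} (hA : EntersOnlyAt δ s A σA)
    (hB : EntersOnlyAt δ s B σB) (hσA : σA ∈ B) : EntersOnlyAt δ s (A ∪ B) σB := by
  have hentB : ∀ u, IsEntrance δ (A ∪ B) u → u ∈ B → u = σB :=
    fun u ⟨_, y, v, hv, hvu⟩ huB => hB.1 u ⟨huB, y, v, fun h => hv (.inr h), hvu⟩
  refine ⟨fun u hu => ?_, ?_⟩
  · rcases hu.1 with huA | huB
    · have hu' : u = σA :=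
        hA.1 u ⟨huA, hu.2.imp fun _ ⟨v, hv, hvu⟩ => ⟨v, fun h => hv (.inl h), hvu⟩⟩
      exact hentB u hu (hu' ▸ hσA)
    · exact hentB u hu huB
  · rintro (hs | hs)
    · exact hB.2 (hA.2 hs ▸ hσA)
    · exact hB.2 hs

theorem EntersOnlyAt.mem_or_mem (hacc : Accessible δ s) {σA σB : Q}
    (hA : EntersOnlyAt δ s A σA) (hB : EntersOnlyAt δ s B σB) (hAB : (A ∩ B).Nonempty) :
    σA ∈ B ∨ σB ∈ A := by
  by_contra! h
  have hs := start_mem_of_forall_not_isEntrance hacc hAB fun u ⟨⟨huA, huB⟩, y, v, hv, hvu⟩ => by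
    by_cases hvA : v ∈ A
    · exact h.2 (hB.1 u ⟨huB, y, v, fun hvB => hv ⟨hvA, hvB⟩, hvu⟩ ▸ huA)
    · exact h.1 (hA.1 u ⟨huA, y, v, hvA, hvu⟩ ▸ huB)
  exact h.1 (hA.2 hs.1 ▸ hs.2)

theorem isThinModule_of_entersOnlyAt {σ : Q} (hne : M.Nonempty) (hσ : EntersOnlyAt δ s M σ)
    (hexit : ∀ x v, IsExit δ M x v → ExitsThrough δ x M v) : IsThinModule δ s M := by
  refine ⟨⟨hne, fun u v hu hv => (hσ.1 u hu).trans (hσ.1 v hv).symm,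
    fun hs u hu => (hσ.1 u hu).trans (hσ.2 hs), fun y ⟨w, hw⟩ => ?_⟩, fun y => ?_⟩
  · exact ⟨fun u v hu hv => ((hexit y w hw).1 u hu).trans ((hexit y w hw).1 v hv).symm,
      (hexit y w hw).2.1⟩
  · by_cases hex : ∃ v, IsExit δ M y v
    · obtain ⟨w, hw⟩ := hex
      exact .inr (hexit y w hw).2.2
    · exact .inl hex

theorem IsThinModule.union [Finite Q] (hacc : Accessible δ s) (hA : IsThinModule δ s A)
    (hB : IsThinModule δ s B) (hAB : (A ∩ B).Nonempty) : IsThinModule δ s (A ∪ B) := by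
  obtain ⟨σA, hσA⟩ := exists_isStartNode hacc hA.1.1
  obtain ⟨σB, hσB⟩ := exists_isStartNode hacc hB.1.1
  replace hσA := hA.1.entersOnlyAt hσA
  replace hσB := hB.1.entersOnlyAt hσB
  have hent : ∃ σ, EntersOnlyAt δ s (A ∪ B) σ := by
    rcases hσA.mem_or_mem hacc hσB hAB with h | h
    · exact ⟨σB, hσA.union hσB h⟩
    · exact ⟨σA, Set.union_comm A B ▸ hσB.union hσA h⟩
  obtain ⟨σ, hσ⟩ := hent
  refine isThinModule_of_entersOnlyAt (hA.1.1.mono Set.subset_union_left) hσ ?_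
  rintro x v ⟨hv, u, hu | hu, huv⟩
  · exact hA.exitsThrough_union hB hAB ⟨fun h => hv (.inl h), u, hu, huv⟩ fun h => hv (.inr h)
  · rw [Set.union_comm] at hv ⊢
    exact hB.exitsThrough_union hA (Set.inter_comm A B ▸ hAB)
      ⟨fun h => hv (.inl h), u, hu, huv⟩ fun h => hv (.inr h)

end Fsm

/-- In an accessible FSM, `M ⊆ Q` is a thin module iff there is a
(nonempty) overlapping collection of indecomposable thin modules whose union is
`M`. -/
theorem stmt14 [Fintype Q] (δ : Q → E → Option Q) (s : Q) (hacc : Accessible δ s)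
    (M : Set Q) :
    IsThinModule δ s M ↔
      ∃ S : Set (Set Q), S.Nonempty ∧ (∀ A ∈ S, IndecompThin δ s A) ∧
        OverlapColl S ∧ ⋃₀ S = M := by
  constructor
  · exact exists_indecomposable_overlapColl (F := {N | IsThinModule δ s N})
  · rintro ⟨S, hne, hS, hoc, rfl⟩
    exact hoc.sUnion_mem (fun A hA B hB hAB => hA.union hacc hB hAB.1) (fun A hA => (hS A hA).1)
      hne S.toFinite
end
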